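/- arXiv:1805.12486 — 4 statements merged into one kernel-verified Lean document; each statement's English description precedes it below -/
import Mathlib

section
/- Let 0 < α < 1, μ ∈ ℝ and c ≥ 0. Then there exists z₀ > 0 such that for every z ∈ ℝ with |z| > z₀: ∫₀^{z−μ} u / ((1+|u+μ|^{α})(1+|u+μ|^{α}+c)) du ≥ (1/(4(1−α))) · (|z−μ|^{2(1−α)} − |sgn(z)·z₀ − μ|^{2(1−α)}). -/
/-!
For `u ≥ A` with `A` large, `|u + μ| ^ α ≤ u ^ α + |μ| ^ α` makes the denominator at most
`2 u ^ (2α)`, so the integrand dominates `u ^ (1 - 2α) / 2`, whose integral from `A` is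
`(Z ^ (2(1-α)) - A ^ (2(1-α))) / (4(1-α))`; the integrand is nonnegative on `[0, A]`.
Negative `z` reduce to positive ones through `u ↦ -u`, which trades `μ` for `-μ`.
-/

open MeasureTheory Set

namespace GrowthIntegral

noncomputable def denom (α μ c u : ℝ) : ℝ := (1 + |u + μ| ^ α) * (1 + |u + μ| ^ α + c)

/-- With `t = u ^ α ≥ 3K`, where `K = 1 + c + m ^ α`, we get `(t + K) ^ 2 ≤ (4t/3) ^ 2 ≤ 2t ^ 2`. -/
noncomputable def denomThreshold (α c m : ℝ) : ℝ := (3 * (1 + c + m ^ α)) ^ α⁻¹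

variable {α μ c : ℝ}

lemma denom_pos (hc : 0 ≤ c) (u : ℝ) : 0 < denom α μ c u := by
  unfold denom
  positivity

lemma denom_neg (u : ℝ) : denom α μ c (-u) = denom α (-μ) c u := by
  simp only [denom, show -u + μ = -(u + -μ) by ring, abs_neg]

lemma denomThreshold_pos (hc : 0 ≤ c) {m : ℝ} (hm : 0 ≤ m) : 0 < denomThreshold α c m := by
  unfold denomThreshold
  positivity

lemma intervalIntegrable_div_denom (hα : 0 ≤ α) (hc : 0 ≤ c) (a b : ℝ) :
    IntervalIntegrable (fun u => u / denom α μ c u) volume a b := by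
  have hpow : Continuous fun u : ℝ => |u + μ| ^ α :=
    Continuous.rpow_const (by fun_prop) fun _ => Or.inr hα
  have hden : Continuous (denom α μ c) :=
    (continuous_const.add hpow).mul ((continuous_const.add hpow).add continuous_const)
  exact (continuous_id.div hden fun u => (denom_pos hc u).ne').intervalIntegrable a b

lemma integral_neg_div_denom (Z : ℝ) :
    ∫ u in (0:ℝ)..-Z, u / denom α μ c u = ∫ u in (0:ℝ)..Z, u / denom α (-μ) c u := by
  have h := intervalIntegral.integral_comp_neg (a := 0) (b := Z) fun u => u / denom α μ c u
  simp only [denom_neg, neg_div, intervalIntegral.integral_neg, neg_zero] at h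
  rw [intervalIntegral.integral_symm, ← h, neg_neg]

lemma denom_le_two_mul_rpow (hα0 : 0 < α) (hα1 : α ≤ 1) (hc : 0 ≤ c) {m u : ℝ}
    (hμ : |μ| ≤ m) (hu : denomThreshold α c m ≤ u) : denom α μ c u ≤ 2 * u ^ (2 * α) := by
  have hm : 0 ≤ m := (abs_nonneg μ).trans hμ
  set K := 1 + c + m ^ α
  have hK : 1 ≤ K := by have := Real.rpow_nonneg hm α; linarith
  have hu0 : 0 < u := (denomThreshold_pos hc hm).trans_le hu
  set t := u ^ α
  have ht : 3 * K ≤ t := by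
    calc 3 * K = (denomThreshold α c m) ^ α :=
          (Real.rpow_inv_rpow (by positivity) hα0.ne').symm
      _ ≤ t := Real.rpow_le_rpow (denomThreshold_pos hc hm).le hu hα0.le
  have hpow : |u + μ| ^ α ≤ t + m ^ α :=
    calc |u + μ| ^ α ≤ (u + m) ^ α := by
          gcongr
          calc |u + μ| ≤ |u| + |μ| := abs_add_le u μ
            _ ≤ u + m := by rw [abs_of_pos hu0]; linarith
      _ ≤ t + m ^ α := Real.rpow_add_le_add_rpow hu0.le hm hα0.le hα1
  have hsq : u ^ (2 * α) = t * t := by rw [two_mul, Real.rpow_add hu0]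
  have hpow0 : 0 ≤ |u + μ| ^ α := by positivity
  calc denom α μ c u ≤ (t + K) * (t + K) := by
        unfold denom
        apply mul_le_mul <;> linarith
    _ ≤ 2 * u ^ (2 * α) := by rw [hsq]; nlinarith

lemma integral_half_rpow (hα1 : α < 1) (A Z : ℝ) :
    ∫ u in A..Z, u ^ (1 - 2 * α) / 2 =
      1 / (4 * (1 - α)) * (Z ^ (2 * (1 - α)) - A ^ (2 * (1 - α))) := by
  have h1α : 1 - α ≠ 0 := by linarith
  rw [intervalIntegral.integral_div, integral_rpow (Or.inl (by linarith)),
    show 1 - 2 * α + 1 = 2 * (1 - α) by ring]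
  field_simp
  ring

lemma le_integral_div_denom (hα0 : 0 ≤ α) (hα1 : α < 1) (hc : 0 ≤ c) {A Z : ℝ} (hA : 0 < A)
    (hAZ : A ≤ Z) (hden : ∀ u ∈ Icc A Z, denom α μ c u ≤ 2 * u ^ (2 * α)) :
    1 / (4 * (1 - α)) * (Z ^ (2 * (1 - α)) - A ^ (2 * (1 - α))) ≤
      ∫ u in (0:ℝ)..Z, u / denom α μ c u := by
  have hint := intervalIntegrable_div_denom (μ := μ) hα0 hc
  have hhead : 0 ≤ ∫ u in (0:ℝ)..A, u / denom α μ c u :=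
    intervalIntegral.integral_nonneg hA.le fun u hu => div_nonneg hu.1 (denom_pos hc u).le
  have htail : ∫ u in A..Z, u ^ (1 - 2 * α) / 2 ≤ ∫ u in A..Z, u / denom α μ c u := by
    refine intervalIntegral.integral_mono_on hAZ
      ((intervalIntegral.intervalIntegrable_rpow' (by linarith)).div_const 2) (hint A Z) ?_
    intro u hu
    have hu0 : 0 < u := hA.trans_le hu.1
    calc u ^ (1 - 2 * α) / 2 = u / (2 * u ^ (2 * α)) := by
          rw [Real.rpow_sub hu0, Real.rpow_one]
          field_simp
      _ ≤ u / denom α μ c u := by gcongr; exacts [denom_pos hc u, hden u hu]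
  rw [← intervalIntegral.integral_add_adjacent_intervals (hint 0 A) (hint A Z),
    ← integral_half_rpow hα1]
  linarith

lemma le_integral_div_denom_of_lt (hα0 : 0 < α) (hα1 : α < 1) (hc : 0 ≤ c) {z₀ z : ℝ}
    (hz₀ : denomThreshold α c |μ| + |μ| ≤ z₀) (hz : z₀ < z) :
    1 / (4 * (1 - α)) * ((z - μ) ^ (2 * (1 - α)) - (z₀ - μ) ^ (2 * (1 - α))) ≤
      ∫ u in (0:ℝ)..(z - μ), u / denom α μ c u := by
  have hA : denomThreshold α c |μ| ≤ z₀ - μ := by linarith [le_abs_self μ]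
  exact le_integral_div_denom hα0.le hα1 hc ((denomThreshold_pos hc (abs_nonneg μ)).trans_le hA)
    (by linarith) fun u hu =>
      denom_le_two_mul_rpow hα0 hα1.le hc le_rfl (hA.trans hu.1)

end GrowthIntegral

open GrowthIntegral in
/-- The key integral inequality (5.2) from the proof of Corollary 4.1. -/
theorem stmt_3 (α : ℝ) (hα0 : 0 < α) (hα1 : α < 1) (μ c : ℝ) (hc : 0 ≤ c) :
    ∃ z₀ > (0:ℝ), ∀ z : ℝ, z₀ < |z| →
      (1 / (4 * (1 - α))) *
          (|z - μ| ^ (2 * (1 - α)) - |Real.sign z * z₀ - μ| ^ (2 * (1 - α))) ≤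
        ∫ u in (0:ℝ)..(z - μ), u / ((1 + |u + μ| ^ α) * (1 + |u + μ| ^ α + c)) := by
  set z₀ := denomThreshold α c |μ| + |μ|
  have hμ : |μ| < z₀ := lt_add_of_pos_left _ (denomThreshold_pos hc (abs_nonneg μ))
  have hz₀_pos : 0 < z₀ := (abs_nonneg μ).trans_lt hμ
  refine ⟨z₀, hz₀_pos, fun z hz => ?_⟩
  change _ ≤ ∫ u in (0:ℝ)..(z - μ), u / denom α μ c u
  obtain ⟨hμ_lo, hμ_hi⟩ := abs_lt.mp hμ
  rcases lt_trichotomy z 0 with hneg | rfl | hpos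
  · rw [abs_of_neg hneg] at hz
    have hz_abs : |z - μ| = -z - -μ := by rw [abs_of_neg (by linarith)]; ring
    have hz₀_abs : |-1 * z₀ - μ| = z₀ - -μ := by rw [abs_of_neg (by linarith)]; ring
    rw [Real.sign_of_neg hneg, hz_abs, hz₀_abs, show z - μ = -(-z - -μ) by ring,
      integral_neg_div_denom]
    exact le_integral_div_denom_of_lt hα0 hα1 hc (μ := -μ) (by rw [abs_neg]) hz
  · rw [abs_zero] at hz; linarith
  · rw [abs_of_pos hpos] at hz
    rw [Real.sign_of_pos hpos, one_mul, abs_of_pos (by linarith : 0 < z - μ),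
      abs_of_pos (by linarith : 0 < z₀ - μ)]
    exact le_integral_div_denom_of_lt hα0 hα1 hc le_rfl hz
end

section
/- Let a > 0, ι > 0, κ > 0, A, D ∈ ℝ, and let h : ℝ → ℝ be continuously differentiable with 0 < c ≤ h′(x) ≤ C for all x ∈ ℝ, for constants c, C. For t > 0 and suitable g : ℝ → ℝ define (P_t g)(x) := ∫_ℝ g(y) (2πt)^{−1/2} exp(−(x−y)²/(2t)) dy. Let G be a real random variable whose law is the centered Gaussian law on ℝ with variance ι, and set Y := κ·(P_a h)(A+G) + D. Then the law of Y is absolutely continuous with respect to Lebesgue measure with a density p satisfying, for almost every x ∈ ℝ: (E|Y−E Y|/(2C²κ²ι)) · exp(−(x−E Y)²/(2c²κ²ι)) ≤ p(x) ≤ (E|Y−E Y|/(2c²κ²ι)) · exp(−(x−E Y)²/(2C²κ²ι)). -/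
/-!
Write `Y = f(G)` with `f z = κ (P_a h)(A + z) + D`. Differentiating under the Gaussian integral,
`f' = κ P_a h'(A + ·)` takes values in `[cκ, Cκ]`, so `f` is an increasing diffeomorphism of `ℝ`
and `Y` has density `p (f z) = φ z / f' z`, where `φ` is the `N(0, ι)` density.

Everything then comes from `T z = ∫_z^∞ (f - EY) φ`. For `k = cκ`, the function `T - kιφ`
vanishes at `±∞` and has derivative `-(f z - k z - EY) φ z`, which changes sign once, from `+`
to `-`; so `T ≥ cκι φ`, and symmetrically `T ≤ Cκι φ`. Hence `(log T)' = -(f - EY) φ / T` is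
comparable to `-(f - EY) f' / (k²ι)`, and integrating from the zero `z₀` of `f - EY` gives
`T z₀ e^{-(f z - EY)²/(2c²κ²ι)} ≤ T z ≤ T z₀ e^{-(f z - EY)²/(2C²κ²ι)}`, while `2 T z₀ = E|Y - EY|`.
Dividing by `f' ∈ [cκ, Cκ]` gives the bounds on `p`.
-/

open MeasureTheory ProbabilityTheory

/-- The Gaussian (heat) semigroup kernel applied to `g`:
`(P_t g)(x) = ∫ g(y) (2πt)^{-1/2} exp(-(x-y)²/(2t)) dy`. -/
noncomputable def heatP (t : ℝ) (g : ℝ → ℝ) (x : ℝ) : ℝ :=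
  ∫ y : ℝ, g y * ((2 * Real.pi * t) ^ (-(1:ℝ) / 2) * Real.exp (-(x - y) ^ 2 / (2 * t)))

open Real Filter Set Topology
open scoped NNReal

section RealCalculus

lemma le_apply_of_hasDerivAt_nonpos_nonneg {W W' : ℝ → ℝ} (hW : ∀ z, HasDerivAt W (W' z) z)
    {z₀ : ℝ} (hneg : ∀ z ≤ z₀, W' z ≤ 0) (hpos : ∀ z, z₀ ≤ z → 0 ≤ W' z) (z : ℝ) :
    W z₀ ≤ W z := by
  have hd : Differentiable ℝ W := fun z => (hW z).differentiableAt
  rcases le_total z z₀ with hz | hz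
  · refine antitoneOn_of_deriv_nonpos (convex_Iic z₀) hd.continuous.continuousOn
      hd.differentiableOn (fun y hy => ?_) hz self_mem_Iic hz
    rw [(hW y).deriv]
    exact hneg y (mem_Iic.1 (interior_subset hy))
  · refine monotoneOn_of_deriv_nonneg (convex_Ici z₀) hd.continuous.continuousOn
      hd.differentiableOn (fun y hy => ?_) self_mem_Ici hz hz
    rw [(hW y).deriv]
    exact hpos y (mem_Ici.1 (interior_subset hy))

lemma nonneg_of_hasDerivAt_neg_mul_monotone {U g φ : ℝ → ℝ}
    (hU : ∀ z, HasDerivAt U (-(g z) * φ z) z) (hg : Monotone g) (hφ : ∀ z, 0 ≤ φ z)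
    (htop : Tendsto U atTop (𝓝 0)) (hbot : Tendsto U atBot (𝓝 0)) (z : ℝ) : 0 ≤ U z := by
  have hd : Differentiable ℝ U := fun z => (hU z).differentiableAt
  rcases le_total (g z) 0 with hgz | hgz
  · have hmono : MonotoneOn U (Iic z) :=
      monotoneOn_of_deriv_nonneg (convex_Iic z) hd.continuous.continuousOn hd.differentiableOn
        fun y hy => by
          rw [(hU y).deriv]
          exact mul_nonneg (neg_nonneg.2 ((hg (mem_Iic.1 (interior_subset hy))).trans hgz)) (hφ y)
    exact le_of_tendsto hbot ((eventually_le_atBot z).mono fun y hy => hmono hy self_mem_Iic hy)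
  · have hanti : AntitoneOn U (Ici z) :=
      antitoneOn_of_deriv_nonpos (convex_Ici z) hd.continuous.continuousOn hd.differentiableOn
        fun y hy => by
          rw [(hU y).deriv]
          exact mul_nonpos_of_nonpos_of_nonneg
            (neg_nonpos.2 (hgz.trans (hg (mem_Ici.1 (interior_subset hy))))) (hφ y)
    exact le_of_tendsto htop ((eventually_ge_atTop z).mono fun y hy => hanti self_mem_Ici hy hy)

lemma lipschitzWith_of_hasDerivAt_abs_le {f f' : ℝ → ℝ} {M : ℝ} (hf : ∀ x, HasDerivAt f (f' x) x)
    (hM : ∀ x, |f' x| ≤ M) : LipschitzWith M.toNNReal f :=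
  lipschitzWith_of_nnnorm_deriv_le (fun x => (hf x).differentiableAt) fun x => by
    rw [← NNReal.coe_le_coe, coe_nnnorm, (hf x).deriv, Real.norm_eq_abs]
    exact (hM x).trans (le_coe_toNNReal M)

lemma surjective_of_le_hasDerivAt {f f' : ℝ → ℝ} {c : ℝ} (hc : 0 < c)
    (hf : ∀ x, HasDerivAt f (f' x) x) (hf' : ∀ x, c ≤ f' x) : Function.Surjective f := by
  have hd : Differentiable ℝ f := fun x => (hf x).differentiableAt
  have hgrow : ∀ ⦃x y⦄, x ≤ y → c * (y - x) ≤ f y - f x :=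
    mul_sub_le_image_sub_of_le_deriv hd fun x => (hf x).deriv ▸ hf' x
  refine hd.continuous.surjective ?_ ?_
  · refine tendsto_atTop_mono' _ ((eventually_ge_atTop 0).mono fun x hx => ?_)
      (tendsto_atTop_add_const_left _ (f 0) (tendsto_id.const_mul_atTop hc))
    dsimp only [id]
    linarith [hgrow hx]
  · refine tendsto_atBot_mono' _ ((eventually_le_atBot 0).mono fun x hx => ?_)
      (tendsto_atBot_add_const_left _ (f 0) (tendsto_id.const_mul_atBot hc))
    dsimp only [id]
    linarith [hgrow hx]

end RealCalculus

section GaussianDensity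

variable {v : ℝ≥0}

lemma hasDerivAt_gaussianPDFReal_zero (v : ℝ≥0) (x : ℝ) :
    HasDerivAt (gaussianPDFReal 0 v) (-(x / v) * gaussianPDFReal 0 v x) x := by
  have h := ((((hasDerivAt_id x).sub_const 0).pow 2).neg.div_const (2 * (v : ℝ))).exp.const_mul
    (√(2 * π * v))⁻¹
  exact h.congr_deriv (by
    simp only [gaussianPDFReal, Pi.neg_apply, Pi.pow_apply, id, sub_zero]
    ring)

lemma tendsto_gaussianPDFReal_zero_cocompact (v : ℝ≥0) :
    Tendsto (gaussianPDFReal 0 v) (cocompact ℝ) (𝓝 0) := by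
  rcases eq_or_ne v 0 with rfl | hv
  · rw [gaussianPDFReal_zero_var]
    exact tendsto_const_nhds
  have h := (tendsto_rpow_abs_mul_exp_neg_mul_sq_cocompact
    (a := (2 * (v : ℝ))⁻¹) (by positivity) 0).const_mul (√(2 * π * v))⁻¹
  rw [mul_zero] at h
  refine h.congr fun x => ?_
  simp only [gaussianPDFReal, sub_zero, rpow_zero, one_mul]
  ring_nf

lemma continuous_gaussianPDFReal (μ : ℝ) (v : ℝ≥0) : Continuous (gaussianPDFReal μ v) := by
  rw [gaussianPDFReal_def]
  fun_prop

lemma integrable_mul_gaussianPDFReal_iff (hv : v ≠ 0) {F : ℝ → ℝ} :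
    Integrable (fun x => F x * gaussianPDFReal 0 v x) ↔ Integrable F (gaussianReal 0 v) := by
  rw [gaussianReal_of_var_ne_zero _ hv, integrable_withDensity_iff_integrable_smul'
    (measurable_gaussianPDF _ _) (ae_of_all _ fun _ => gaussianPDF_lt_top)]
  simp [toReal_gaussianPDF, mul_comm]

lemma integral_gaussianReal_eq_integral_mul (hv : v ≠ 0) (F : ℝ → ℝ) :
    ∫ x, F x ∂gaussianReal 0 v = ∫ x, F x * gaussianPDFReal 0 v x := by
  simp [integral_gaussianReal_eq_integral_smul hv, mul_comm]

lemma LipschitzWith.integrable_gaussianReal {L : ℝ≥0} {F : ℝ → ℝ} (hF : LipschitzWith L F)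
    (μ : ℝ) (v : ℝ≥0) : Integrable F (gaussianReal μ v) := by
  refine ((integrable_const ‖F 0‖).add
    (((memLp_id_gaussianReal 1).integrable le_rfl).norm.const_mul L)).mono'
    hF.continuous.aestronglyMeasurable (ae_of_all _ fun x => ?_)
  have h := hF.dist_le_mul x 0
  rw [dist_eq_norm, dist_zero_right] at h
  simp only [Pi.add_apply, id]
  linarith [norm_le_insert' (F x) (F 0)]

end GaussianDensity

section HeatSemigroup

variable {v : ℝ≥0}

lemma heatP_eq_integral_gaussianReal (hv : v ≠ 0) (g : ℝ → ℝ) (x : ℝ) :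
    heatP v g x = ∫ u, g (x + u) ∂gaussianReal 0 v := by
  have hker : ∀ y, (2 * π * v) ^ (-(1 : ℝ) / 2) * rexp (-(x - y) ^ 2 / (2 * v))
      = gaussianPDFReal x v y := fun y => by
    rw [gaussianPDFReal_def, neg_div, rpow_neg (by positivity), ← sqrt_eq_rpow, sub_sq_comm]
  rw [← (measurableEmbedding_addLeft x).integral_map, gaussianReal_map_const_add, zero_add,
    integral_gaussianReal_eq_integral_smul hv]
  simp_rw [heatP, hker, smul_eq_mul, mul_comm]

lemma hasDerivAt_heatP (hv : v ≠ 0) {g : ℝ → ℝ} {M : ℝ} (hg : Differentiable ℝ g)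
    (hg' : ∀ x, |deriv g x| ≤ M) (x : ℝ) :
    HasDerivAt (heatP v g) (heatP v (deriv g) x) x := by
  have hlip := lipschitzWith_of_hasDerivAt_abs_le (fun y => (hg y).hasDerivAt) hg'
  have hint : Integrable (fun u => g (x + u)) (gaussianReal 0 v) :=
    LipschitzWith.integrable_gaussianReal (LipschitzWith.of_dist_le_mul (K := M.toNNReal)
      fun u w => by simpa only [dist_add_left] using hlip.dist_le_mul (x + u) (x + w)) 0 v
  rw [funext (heatP_eq_integral_gaussianReal hv g), heatP_eq_integral_gaussianReal hv]
  exact (hasDerivAt_integral_of_dominated_loc_of_deriv_le (bound := fun _ => M)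
    (Metric.ball_mem_nhds x one_pos)
    (Eventually.of_forall fun y =>
      (hg.continuous.comp (continuous_const_add y)).aestronglyMeasurable)
    hint ((measurable_deriv g).comp (measurable_const_add x)).aestronglyMeasurable
    (ae_of_all _ fun u y _ => hg' (y + u)) (integrable_const M)
    (ae_of_all _ fun u y _ => (hg (y + u)).hasDerivAt.comp_add_const y u)).2

lemma heatP_mem_Icc (hv : v ≠ 0) {g : ℝ → ℝ} (hg : Measurable g) {c C : ℝ}
    (hgb : ∀ x, g x ∈ Icc c C) (x : ℝ) : heatP v g x ∈ Icc c C := by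
  rw [heatP_eq_integral_gaussianReal hv]
  exact (convex_Icc c C).integral_mem isClosed_Icc (ae_of_all _ fun u => hgb (x + u))
    (.of_mem_Icc c C (hg.comp (measurable_const_add x)).aemeasurable
      (ae_of_all _ fun u => hgb (x + u)))

end HeatSemigroup

lemma map_gaussianReal_eq_withDensity {μ : ℝ} {v : ℝ≥0} (hv : v ≠ 0) (e : ℝ ≃o ℝ)
    {f' : ℝ → ℝ} (he : ∀ z, HasDerivAt e (f' z) z) (hf' : ∀ z, 0 < f' z) :
    (gaussianReal μ v).map e = volume.withDensity fun x =>
      ENNReal.ofReal (gaussianPDFReal μ v (e.symm x) / f' (e.symm x)) := by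
  have he' : ∀ x, HasDerivAt e.symm (f' (e.symm x))⁻¹ x := fun x =>
    HasDerivAt.of_local_left_inverse e.symm.toHomeomorph.continuous.continuousAt
      (by simpa using he (e.symm x)) (hf' _).ne' (Eventually.of_forall e.apply_symm_apply)
  ext s hs
  rw [Measure.map_apply e.monotone.measurable hs, gaussianReal_apply μ hv,
    withDensity_apply _ hs, ← e.symm_symm, ← e.symm.image_eq_preimage_symm,
    lintegral_image_eq_lintegral_abs_deriv_mul hs (fun x _ => (he' x).hasDerivWithinAt)
      e.symm.injective.injOn]
  refine setLIntegral_congr_fun hs fun x _ => ?_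
  rw [gaussianPDF, ← ENNReal.ofReal_mul (abs_nonneg _), abs_inv, abs_of_pos (hf' _),
    inv_mul_eq_div, e.symm_symm]

section GaussianTail

variable {v : ℝ≥0} {f : ℝ → ℝ} {m : ℝ}

/-- For `Y = f(G)` with `G ~ N(0, v)` and `f` increasing, this is `∫_{f z}^∞ (y - m) p_Y(y) dy`. -/
noncomputable def gaussianTail (v : ℝ≥0) (f : ℝ → ℝ) (m z : ℝ) : ℝ :=
  ∫ w in Ioi z, (f w - m) * gaussianPDFReal 0 v w

lemma gaussianTail_eq_sub_intervalIntegral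
    (hi : Integrable fun w => (f w - m) * gaussianPDFReal 0 v w) (z : ℝ) :
    gaussianTail v f m z = gaussianTail v f m 0 - ∫ w in 0..z, (f w - m) * gaussianPDFReal 0 v w :=
  eq_sub_of_add_eq' (intervalIntegral.integral_interval_add_Ioi hi.integrableOn hi.integrableOn)

lemma hasDerivAt_gaussianTail (hf : Continuous f)
    (hi : Integrable fun w => (f w - m) * gaussianPDFReal 0 v w) (z : ℝ) :
    HasDerivAt (gaussianTail v f m) (-((f z - m) * gaussianPDFReal 0 v z)) z := by
  have hc : Continuous fun w => (f w - m) * gaussianPDFReal 0 v w :=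
    (hf.sub continuous_const).mul (continuous_gaussianPDFReal 0 v)
  rw [funext (gaussianTail_eq_sub_intervalIntegral hi)]
  exact (intervalIntegral.integral_hasDerivAt_right hi.intervalIntegrable
    (hc.stronglyMeasurableAtFilter _ _) hc.continuousAt).const_sub _

lemma tendsto_gaussianTail_atTop : Tendsto (gaussianTail v f m) atTop (𝓝 0) :=
  tendsto_integral_Ioi_zero tendsto_id

lemma tendsto_gaussianTail_atBot (hi : Integrable fun w => (f w - m) * gaussianPDFReal 0 v w)
    (h0 : ∫ w, (f w - m) * gaussianPDFReal 0 v w = 0) :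
    Tendsto (gaussianTail v f m) atBot (𝓝 0) := by
  have h := (intervalIntegral_tendsto_integral_Iic 0 hi.integrableOn tendsto_id).const_add
    (gaussianTail v f m 0)
  have hlim : gaussianTail v f m 0 + ∫ w in Iic 0, (f w - m) * gaussianPDFReal 0 v w = 0 := by
    rw [gaussianTail, add_comm, intervalIntegral.integral_Iic_add_Ioi hi.integrableOn
      hi.integrableOn, h0]
  refine hlim ▸ h.congr fun z => ?_
  rw [gaussianTail_eq_sub_intervalIntegral hi z, intervalIntegral.integral_symm, id, sub_eq_add_neg]

lemma mul_gaussianPDFReal_le_gaussianTail (hv : v ≠ 0) (hf : Continuous f)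
    (hi : Integrable fun w => (f w - m) * gaussianPDFReal 0 v w)
    (h0 : ∫ w, (f w - m) * gaussianPDFReal 0 v w = 0) {k : ℝ}
    (hk : Monotone fun z => f z - k * z) (z : ℝ) :
    k * v * gaussianPDFReal 0 v z ≤ gaussianTail v f m z := by
  let U := fun z => gaussianTail v f m z - k * v * gaussianPDFReal 0 v z
  have hU : ∀ z, HasDerivAt U (-(f z - k * z - m) * gaussianPDFReal 0 v z) z := fun z =>
    ((hasDerivAt_gaussianTail hf hi z).sub
      ((hasDerivAt_gaussianPDFReal_zero v z).const_mul (k * v))).congr_deriv (by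
        field_simp [NNReal.coe_ne_zero.2 hv]
        ring)
  have hφ := tendsto_gaussianPDFReal_zero_cocompact v
  have htop : Tendsto U atTop (𝓝 0) := by
    simpa using tendsto_gaussianTail_atTop.sub
      ((hφ.mono_left atTop_le_cocompact).const_mul (k * v))
  have hbot : Tendsto U atBot (𝓝 0) := by
    simpa using (tendsto_gaussianTail_atBot hi h0).sub
      ((hφ.mono_left atBot_le_cocompact).const_mul (k * v))
  linarith [nonneg_of_hasDerivAt_neg_mul_monotone hU
    (fun x y hxy => sub_le_sub_right (hk hxy) m) (gaussianPDFReal_nonneg 0 v) htop hbot z]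

lemma gaussianTail_le_mul_gaussianPDFReal (hv : v ≠ 0) (hf : Continuous f)
    (hi : Integrable fun w => (f w - m) * gaussianPDFReal 0 v w)
    (h0 : ∫ w, (f w - m) * gaussianPDFReal 0 v w = 0) {k : ℝ}
    (hk : Antitone fun z => f z - k * z) (z : ℝ) :
    gaussianTail v f m z ≤ k * v * gaussianPDFReal 0 v z := by
  have hneg : (fun w => (-f w - -m) * gaussianPDFReal 0 v w) =
      fun w => -((f w - m) * gaussianPDFReal 0 v w) := funext fun w => by ring
  have h := mul_gaussianPDFReal_le_gaussianTail (f := fun w => -f w) (m := -m) (k := -k) hv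
    hf.neg (by rw [hneg]; exact hi.neg) (by rw [hneg, integral_neg, h0, neg_zero])
    (fun x y hxy => by have := hk hxy; dsimp only at this ⊢; linarith) z
  rw [gaussianTail, hneg, integral_neg] at h
  rw [gaussianTail]
  linarith

lemma hasDerivAt_gaussianTail_mul_exp {f' : ℝ → ℝ} (hf : ∀ z, HasDerivAt f (f' z) z)
    (hi : Integrable fun w => (f w - m) * gaussianPDFReal 0 v w) (s z : ℝ) :
    HasDerivAt (fun z => gaussianTail v f m z * rexp ((f z - m) ^ 2 / (2 * s)))
      ((f z - m) * (rexp ((f z - m) ^ 2 / (2 * s)) *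
        (gaussianTail v f m z * f' z / s - gaussianPDFReal 0 v z))) z := by
  have hcont : Continuous f := continuous_iff_continuousAt.2 fun z => (hf z).continuousAt
  refine ((hasDerivAt_gaussianTail hcont hi z).mul
    ((((hf z).sub_const m).pow 2).div_const (2 * s)).exp).congr_deriv ?_
  simp only [Pi.pow_apply, Nat.cast_ofNat]
  ring

lemma gaussianTail_mul_exp_le {f' : ℝ → ℝ} (hf : ∀ z, HasDerivAt f (f' z) z)
    (hi : Integrable fun w => (f w - m) * gaussianPDFReal 0 v w) (hmono : Monotone f)
    {z₀ : ℝ} (hz₀ : f z₀ = m) {s : ℝ}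
    (hs : ∀ z, gaussianPDFReal 0 v z ≤ gaussianTail v f m z * f' z / s) (z : ℝ) :
    gaussianTail v f m z₀ * rexp (-(f z - m) ^ 2 / (2 * s)) ≤ gaussianTail v f m z := by
  have hb : ∀ y, 0 ≤ rexp ((f y - m) ^ 2 / (2 * s)) *
      (gaussianTail v f m y * f' y / s - gaussianPDFReal 0 v y) := fun y =>
    mul_nonneg (exp_pos _).le (sub_nonneg.2 (hs y))
  have h := le_apply_of_hasDerivAt_nonpos_nonneg (z₀ := z₀)
    (hasDerivAt_gaussianTail_mul_exp hf hi s)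
    (fun y hy => mul_nonpos_of_nonpos_of_nonneg (by linarith [hmono hy]) (hb y))
    (fun y hy => mul_nonneg (by linarith [hmono hy]) (hb y)) z
  simp only [hz₀, sub_self, ne_eq, OfNat.ofNat_ne_zero, not_false_eq_true, zero_pow, zero_div,
    exp_zero, mul_one] at h
  calc gaussianTail v f m z₀ * rexp (-(f z - m) ^ 2 / (2 * s))
      ≤ gaussianTail v f m z * rexp ((f z - m) ^ 2 / (2 * s)) * rexp (-(f z - m) ^ 2 / (2 * s)) :=
        mul_le_mul_of_nonneg_right h (exp_pos _).le
    _ = gaussianTail v f m z := by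
        rw [mul_assoc, ← exp_add, neg_div, add_neg_cancel, exp_zero, mul_one]

lemma gaussianTail_le_mul_exp {f' : ℝ → ℝ} (hf : ∀ z, HasDerivAt f (f' z) z)
    (hi : Integrable fun w => (f w - m) * gaussianPDFReal 0 v w) (hmono : Monotone f)
    {z₀ : ℝ} (hz₀ : f z₀ = m) {s : ℝ}
    (hs : ∀ z, gaussianTail v f m z * f' z / s ≤ gaussianPDFReal 0 v z) (z : ℝ) :
    gaussianTail v f m z ≤ gaussianTail v f m z₀ * rexp (-(f z - m) ^ 2 / (2 * s)) := by
  have hb : ∀ y, rexp ((f y - m) ^ 2 / (2 * s)) *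
      (gaussianTail v f m y * f' y / s - gaussianPDFReal 0 v y) ≤ 0 := fun y =>
    mul_nonpos_of_nonneg_of_nonpos (exp_pos _).le (sub_nonpos.2 (hs y))
  have h := le_apply_of_hasDerivAt_nonpos_nonneg (z₀ := z₀)
    (fun y => (hasDerivAt_gaussianTail_mul_exp hf hi s y).neg)
    (fun y hy => neg_nonpos.2 (mul_nonneg_of_nonpos_of_nonpos (by linarith [hmono hy]) (hb y)))
    (fun y hy => neg_nonneg.2 (mul_nonpos_of_nonneg_of_nonpos (by linarith [hmono hy]) (hb y))) z
  simp only [hz₀, sub_self, ne_eq, OfNat.ofNat_ne_zero, not_false_eq_true, zero_pow, zero_div,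
    exp_zero, mul_one, Pi.neg_apply, neg_le_neg_iff] at h
  calc gaussianTail v f m z
      = gaussianTail v f m z * rexp ((f z - m) ^ 2 / (2 * s)) *
          rexp (-(f z - m) ^ 2 / (2 * s)) := by
        rw [mul_assoc, ← exp_add, neg_div, add_neg_cancel, exp_zero, mul_one]
    _ ≤ gaussianTail v f m z₀ * rexp (-(f z - m) ^ 2 / (2 * s)) :=
        mul_le_mul_of_nonneg_right h (exp_pos _).le

lemma integral_abs_mul_gaussianPDFReal_eq
    (hi : Integrable fun w => (f w - m) * gaussianPDFReal 0 v w)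
    (h0 : ∫ w, (f w - m) * gaussianPDFReal 0 v w = 0) (hmono : Monotone f) {z₀ : ℝ}
    (hz₀ : f z₀ = m) :
    ∫ w, |f w - m| * gaussianPDFReal 0 v w = 2 * gaussianTail v f m z₀ := by
  have habs : Integrable fun w => |f w - m| * gaussianPDFReal 0 v w := by
    simpa only [abs_mul, abs_of_nonneg (gaussianPDFReal_nonneg _ _ _)] using hi.abs
  have hIic : ∫ w in Iic z₀, |f w - m| * gaussianPDFReal 0 v w =
      -∫ w in Iic z₀, (f w - m) * gaussianPDFReal 0 v w := by
    rw [← integral_neg]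
    refine setIntegral_congr_fun measurableSet_Iic fun w hw => ?_
    rw [abs_of_nonpos (by linarith [hmono hw]), neg_mul]
  have hIoi : ∫ w in Ioi z₀, |f w - m| * gaussianPDFReal 0 v w = gaussianTail v f m z₀ :=
    setIntegral_congr_fun measurableSet_Ioi fun w hw => by
      rw [abs_of_nonneg (by linarith [hmono (le_of_lt hw)])]
  have hsplit := intervalIntegral.integral_Iic_add_Ioi hi.integrableOn hi.integrableOn (b := z₀)
  rw [h0, ← gaussianTail] at hsplit
  rw [← intervalIntegral.integral_Iic_add_Ioi habs.integrableOn habs.integrableOn (b := z₀), hIic,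
    hIoi]
  linarith

end GaussianTail

section DensityBounds

variable {v : ℝ≥0} {f f' : ℝ → ℝ} {m c C : ℝ}

lemma gaussianTail_mem_Icc (hv : v ≠ 0) (hf : ∀ z, HasDerivAt f (f' z) z)
    (hf' : ∀ z, c ≤ f' z ∧ f' z ≤ C) (hi : Integrable fun w => (f w - m) * gaussianPDFReal 0 v w)
    (h0 : ∫ w, (f w - m) * gaussianPDFReal 0 v w = 0) (z : ℝ) :
    gaussianTail v f m z ∈ Icc (c * v * gaussianPDFReal 0 v z) (C * v * gaussianPDFReal 0 v z) := by
  have hcont : Continuous f := continuous_iff_continuousAt.2 fun z => (hf z).continuousAt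
  exact ⟨mul_gaussianPDFReal_le_gaussianTail hv hcont hi h0
      (monotone_of_hasDerivAt_nonneg (fun y => (hf y).sub ((hasDerivAt_id y).const_mul c))
        fun y => by simpa using (hf' y).1) z,
    gaussianTail_le_mul_gaussianPDFReal hv hcont hi h0
      (antitone_of_hasDerivAt_nonpos (fun y => (hf y).sub ((hasDerivAt_id y).const_mul C))
        fun y => by simpa using (hf' y).2) z⟩

lemma gaussianPDFReal_div_deriv_bounds (hv : v ≠ 0) (hf : ∀ z, HasDerivAt f (f' z) z)
    (hc : 0 < c) (hf' : ∀ z, c ≤ f' z ∧ f' z ≤ C)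
    (hi : Integrable fun w => (f w - m) * gaussianPDFReal 0 v w)
    (h0 : ∫ w, (f w - m) * gaussianPDFReal 0 v w = 0) {z₀ : ℝ} (hz₀ : f z₀ = m) (z : ℝ) :
    (∫ w, |f w - m| * gaussianPDFReal 0 v w) / (2 * C ^ 2 * v) *
        rexp (-(f z - m) ^ 2 / (2 * c ^ 2 * v)) ≤ gaussianPDFReal 0 v z / f' z ∧
      gaussianPDFReal 0 v z / f' z ≤ (∫ w, |f w - m| * gaussianPDFReal 0 v w) / (2 * c ^ 2 * v) *
        rexp (-(f z - m) ^ 2 / (2 * C ^ 2 * v)) := by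
  have hv' : (0 : ℝ) < v := NNReal.coe_pos.2 (pos_iff_ne_zero.2 hv)
  have hC : 0 < C := hc.trans_le ((hf' 0).1.trans (hf' 0).2)
  have hf'z : 0 < f' z := hc.trans_le (hf' z).1
  have hφ := gaussianPDFReal_pos 0 v z hv
  have hmono : Monotone f :=
    (strictMono_of_hasDerivAt_pos hf fun z => hc.trans_le (hf' z).1).monotone
  set T := gaussianTail v f m
  have hlow y : c * v * gaussianPDFReal 0 v y ≤ T y := (gaussianTail_mem_Icc hv hf hf' hi h0 y).1
  have hup y : T y ≤ C * v * gaussianPDFReal 0 v y := (gaussianTail_mem_Icc hv hf hf' hi h0 y).2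
  have hexp_low := gaussianTail_mul_exp_le hf hi hmono hz₀ (s := c ^ 2 * v) (fun y => by
    rw [le_div_iff₀ (by positivity)]
    calc gaussianPDFReal 0 v y * (c ^ 2 * v) = c * (c * v * gaussianPDFReal 0 v y) := by ring
      _ ≤ T y * f' y := by
        rw [mul_comm (T y)]
        exact mul_le_mul (hf' y).1 (hlow y)
          (by have := gaussianPDFReal_nonneg 0 v y; positivity) (hc.le.trans (hf' y).1)) z
  have hexp_up := gaussianTail_le_mul_exp hf hi hmono hz₀ (s := C ^ 2 * v) (fun y => by
    rw [div_le_iff₀ (by positivity)]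
    calc T y * f' y ≤ (C * v * gaussianPDFReal 0 v y) * C :=
          mul_le_mul (hup y) (hf' y).2 (hc.le.trans (hf' y).1)
            (by have := gaussianPDFReal_nonneg 0 v y; positivity)
      _ = gaussianPDFReal 0 v y * (C ^ 2 * v) := by ring) z
  rw [integral_abs_mul_gaussianPDFReal_eq hi h0 hmono hz₀, mul_comm (2 : ℝ) (T z₀)]
  constructor
  · calc T z₀ * 2 / (2 * C ^ 2 * v) * rexp (-(f z - m) ^ 2 / (2 * c ^ 2 * v))
        = T z₀ * rexp (-(f z - m) ^ 2 / (2 * (c ^ 2 * v))) / (C ^ 2 * v) := by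
          field_simp
      _ ≤ C * v * gaussianPDFReal 0 v z / (C ^ 2 * v) :=
          div_le_div_of_nonneg_right (hexp_low.trans (hup z)) (by positivity)
      _ = gaussianPDFReal 0 v z / C := by field_simp
      _ ≤ gaussianPDFReal 0 v z / f' z := div_le_div_of_nonneg_left hφ.le hf'z (hf' z).2
  · calc gaussianPDFReal 0 v z / f' z ≤ gaussianPDFReal 0 v z / c :=
          div_le_div_of_nonneg_left hφ.le hc (hf' z).1
      _ = c * v * gaussianPDFReal 0 v z / (c ^ 2 * v) := by field_simp
      _ ≤ T z₀ * rexp (-(f z - m) ^ 2 / (2 * (C ^ 2 * v))) / (c ^ 2 * v) :=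
          div_le_div_of_nonneg_right ((hlow z).trans hexp_up) (by positivity)
      _ = T z₀ * 2 / (2 * c ^ 2 * v) * rexp (-(f z - m) ^ 2 / (2 * C ^ 2 * v)) := by
          field_simp

theorem exists_density_map_gaussianReal_bounds (hv : v ≠ 0) (hf : ∀ z, HasDerivAt f (f' z) z)
    (hc : 0 < c) (hf' : ∀ z, c ≤ f' z ∧ f' z ≤ C) (hm : m = ∫ z, f z ∂gaussianReal 0 v) :
    ∃ p : ℝ → ℝ, (gaussianReal 0 v).map f = volume.withDensity (fun x => ENNReal.ofReal (p x)) ∧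
      ∀ x, (∫ z, |f z - m| ∂gaussianReal 0 v) / (2 * C ^ 2 * v) *
          rexp (-(x - m) ^ 2 / (2 * c ^ 2 * v)) ≤ p x ∧
        p x ≤ (∫ z, |f z - m| ∂gaussianReal 0 v) / (2 * c ^ 2 * v) *
          rexp (-(x - m) ^ 2 / (2 * C ^ 2 * v)) := by
  have hpos : ∀ z, 0 < f' z := fun z => hc.trans_le (hf' z).1
  have hsurj := surjective_of_le_hasDerivAt hc hf fun z => (hf' z).1
  let e : ℝ ≃o ℝ := StrictMono.orderIsoOfSurjective f (strictMono_of_hasDerivAt_pos hf hpos) hsurj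
  have hfi : Integrable f (gaussianReal 0 v) := (lipschitzWith_of_hasDerivAt_abs_le hf fun z =>
    abs_le.2 ⟨by linarith [hpos z, (hf' z).2], (hf' z).2⟩).integrable_gaussianReal 0 v
  have hi : Integrable fun w => (f w - m) * gaussianPDFReal 0 v w :=
    (integrable_mul_gaussianPDFReal_iff hv).2 (hfi.sub (integrable_const m))
  have h0 : ∫ w, (f w - m) * gaussianPDFReal 0 v w = 0 := by
    rw [← integral_gaussianReal_eq_integral_mul hv, integral_sub hfi (integrable_const m), ← hm,
      integral_const, probReal_univ, one_smul, sub_self]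
  obtain ⟨z₀, hz₀⟩ := hsurj m
  refine ⟨fun x => gaussianPDFReal 0 v (e.symm x) / f' (e.symm x),
    map_gaussianReal_eq_withDensity hv e hf hpos, fun x => ?_⟩
  have hx : f (e.symm x) = x := e.apply_symm_apply x
  have hbounds := gaussianPDFReal_div_deriv_bounds hv hf hc hf' hi h0 hz₀ (e.symm x)
  rw [hx] at hbounds
  rwa [integral_gaussianReal_eq_integral_mul hv]

end DensityBounds

theorem stmt_6_general {Ω : Type*} [MeasurableSpace Ω] (P : Measure Ω)
    (a ι κ : ℝ) (ha : 0 < a) (hι : 0 < ι) (hκ : 0 < κ) (A D : ℝ)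
    (h : ℝ → ℝ) (hh : ContDiff ℝ 1 h) (c C : ℝ) (hc : 0 < c)
    (hder : ∀ x : ℝ, c ≤ deriv h x ∧ deriv h x ≤ C)
    (G : Ω → ℝ) (hG : Measure.map G P = gaussianReal 0 ⟨ι, hι.le⟩)
    (Y : Ω → ℝ) (hY : Y = fun ω => κ * heatP a h (A + G ω) + D)
    (EY : ℝ) (hEY : EY = ∫ ω, Y ω ∂P) :
    ∃ p : ℝ → ℝ,
      Measure.map Y P = volume.withDensity (fun x => ENNReal.ofReal (p x)) ∧
      ∀ᵐ x ∂(volume : Measure ℝ),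
        (∫ ω, |Y ω - EY| ∂P) / (2 * C ^ 2 * κ ^ 2 * ι) *
            Real.exp (-(x - EY) ^ 2 / (2 * c ^ 2 * κ ^ 2 * ι)) ≤ p x ∧
        p x ≤ (∫ ω, |Y ω - EY| ∂P) / (2 * c ^ 2 * κ ^ 2 * ι) *
            Real.exp (-(x - EY) ^ 2 / (2 * C ^ 2 * κ ^ 2 * ι)) := by
  have ha' : (⟨a, ha.le⟩ : ℝ≥0) ≠ 0 := ne_of_gt ha
  -- `⟨ι, hι.le⟩` elaborates as a bare subtype element, which instance search does not match
  -- against `ℝ≥0`.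
  have : IsProbabilityMeasure (gaussianReal 0 ⟨ι, hι.le⟩) :=
    instIsProbabilityMeasureGaussianReal ..
  have hGlaw : HasLaw G (gaussianReal 0 ⟨ι, hι.le⟩) P :=
    ⟨.of_map_ne_zero (hG ▸ IsProbabilityMeasure.ne_zero _), hG⟩
  have hq : ∀ y, HasDerivAt (heatP a h) (heatP a (deriv h) y) y :=
    hasDerivAt_heatP ha' (hh.differentiable one_ne_zero) fun x =>
      abs_le.2 ⟨by linarith [hder x], (hder x).2⟩
  let f := fun z => κ * heatP a h (A + z) + D
  have hf : ∀ z, HasDerivAt f (κ * heatP a (deriv h) (A + z)) z := fun z =>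
    (((hq (A + z)).comp_const_add A z).const_mul κ).add_const D
  have hf' : ∀ z, c * κ ≤ κ * heatP a (deriv h) (A + z) ∧ κ * heatP a (deriv h) (A + z) ≤ C * κ :=
    fun z => by
      obtain ⟨hlo, hhi⟩ : heatP a (deriv h) (A + z) ∈ Icc c C :=
        heatP_mem_Icc ha' (measurable_deriv h) hder (A + z)
      constructor <;> nlinarith
  have hYf : Y = f ∘ G := hY
  have hfc : Continuous f := continuous_iff_continuousAt.2 fun z => (hf z).continuousAt
  obtain ⟨p, hmap, hp⟩ := exists_density_map_gaussianReal_bounds (ne_of_gt hι) hf (mul_pos hc hκ)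
    hf' (m := EY) (by rw [hEY, hYf]; exact hGlaw.integral_comp hfc.aestronglyMeasurable)
  have habs : ∫ ω, |Y ω - EY| ∂P = ∫ z, |f z - EY| ∂gaussianReal 0 ⟨ι, hι.le⟩ := by
    rw [hYf]
    exact hGlaw.integral_comp (hfc.sub continuous_const).abs.aestronglyMeasurable
  refine ⟨p, ?_, ae_of_all _ fun x => ?_⟩
  · rw [hYf, ← AEMeasurable.map_map_of_aemeasurable hfc.aemeasurable hGlaw.aemeasurable, hG, hmap]
  · have hpx := hp x
    simp only [mul_pow, ← mul_assoc] at hpx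
    rw [habs]
    exact hpx

/-- Theorem 3.1 (first part): Gaussian two-sided density bounds for
`Y = κ·(P_a h)(A+G) + D` with `G` centered Gaussian of variance `ι`. -/
theorem stmt_6 {Ω : Type*} [MeasurableSpace Ω] (P : Measure Ω) [IsProbabilityMeasure P]
    (a ι κ : ℝ) (ha : 0 < a) (hι : 0 < ι) (hκ : 0 < κ) (A D : ℝ)
    (h : ℝ → ℝ) (hh : ContDiff ℝ 1 h) (c C : ℝ) (hc : 0 < c)
    (hder : ∀ x : ℝ, c ≤ deriv h x ∧ deriv h x ≤ C)
    (G : Ω → ℝ) (hG : Measure.map G P = gaussianReal 0 ⟨ι, hι.le⟩)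
    (Y : Ω → ℝ) (hY : Y = fun ω => κ * heatP a h (A + G ω) + D)
    (EY : ℝ) (hEY : EY = ∫ ω, Y ω ∂P) :
    ∃ p : ℝ → ℝ,
      Measure.map Y P = volume.withDensity (fun x => ENNReal.ofReal (p x)) ∧
      ∀ᵐ x ∂(volume : Measure ℝ),
        (∫ ω, |Y ω - EY| ∂P) / (2 * C ^ 2 * κ ^ 2 * ι) *
            Real.exp (-(x - EY) ^ 2 / (2 * c ^ 2 * κ ^ 2 * ι)) ≤ p x ∧
        p x ≤ (∫ ω, |Y ω - EY| ∂P) / (2 * c ^ 2 * κ ^ 2 * ι) *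
            Real.exp (-(x - EY) ^ 2 / (2 * C ^ 2 * κ ^ 2 * ι)) :=
  stmt_6_general P a ι κ ha hι hκ A D h hh c C hc hder G hG Y hY EY hEY
end

section
/- Let u : ℝ → ℝ be a continuous, strictly increasing bijection of ℝ onto ℝ. For a function h : ℝ → ℝ define h̄ := inf{γ > 0 : limsup_{|x|→∞} |h(x)|/|x|^{γ} < ∞} and ḣ := inf{γ > 0 : liminf_{|x|→∞} |h(x)|/|x|^{γ} < ∞}. If 0 < u̇ < ∞ (i.e., the lower growth index of u is finite and positive), then 0 < (u⁻¹)‾ < ∞ (i.e., the upper growth index of the inverse function u⁻¹ is finite and positive). -/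
/-!
An increasing bijection `e` of `ℝ` maps `atBot ⊔ atTop = comap |·| atTop` onto itself, so growth
of `e⁻¹` along this filter can be read off `x ↦ |x| / |e x| ^ δ`. If `|e x| ≥ |x| ^ γ`
eventually (true for `γ` below the lower index of `e`), then `|e⁻¹ y| ≤ |y| ^ γ⁻¹` eventually, so
`γ⁻¹` is an upper exponent for `e⁻¹`. Conversely, if `|e x| ≤ M |x| ^ γ` frequently and
`|e⁻¹ y| ≤ B |y| ^ δ` eventually, then frequently `|x| ≤ B M ^ δ |x| ^ (γ δ)`, which forces
`γ δ ≥ 1`; hence the upper index of `e⁻¹` is at least the inverse of any lower exponent of `e`.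
-/

open Filter Real

section OrderedGroup

variable {α : Type*} [AddCommGroup α] [LinearOrder α] [IsOrderedAddMonoid α]

theorem OrderIso.map_comap_abs_atTop (e : α ≃o α) :
    map e (comap (|·|) atTop) = comap (|·|) atTop := by
  rw [comap_abs_atTop, Filter.map_sup, e.map_atTop, e.map_atBot]

theorem OrderIso.tendsto_comap_abs_atTop (e : α ≃o α) :
    Tendsto e (comap (|·|) atTop) (comap (|·|) atTop) :=
  e.map_comap_abs_atTop.le

theorem OrderIso.isBoundedUnder_comap_abs_atTop_comp_iff {β : Type*} {r : β → β → Prop}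
    (e : α ≃o α) (g : α → β) :
    IsBoundedUnder r (comap (|·|) atTop) (g ∘ e) ↔ IsBoundedUnder r (comap (|·|) atTop) g := by
  rw [← isBoundedUnder_map_iff, e.map_comap_abs_atTop]

end OrderedGroup

theorem eventually_mul_rpow_lt_self (C : ℝ) {a : ℝ} (ha : a < 1) :
    ∀ᶠ t : ℝ in atTop, C * t ^ a < t := by
  filter_upwards [(tendsto_rpow_atTop (sub_pos.2 ha)).eventually_gt_atTop C,
    eventually_gt_atTop 0] with t hC ht
  calc C * t ^ a < t ^ (1 - a) * t ^ a := by gcongr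
    _ = t := by rw [← rpow_add ht, sub_add_cancel, rpow_one]

theorem eventually_one_le_abs : ∀ᶠ x : ℝ in comap (|·|) atTop, 1 ≤ |x| :=
  tendsto_comap.eventually (eventually_ge_atTop 1)

theorem OrderIso.isBoundedUnder_abs_symm_div_rpow_inv (e : ℝ ≃o ℝ) {γ : ℝ} (hγ : 0 < γ)
    (h : ∀ᶠ x in comap (|·|) atTop, |x| ^ γ ≤ |e x|) :
    IsBoundedUnder (· ≤ ·) (comap (|·|) atTop) (fun y => |e.symm y| / |y| ^ γ⁻¹) := by
  rw [← e.isBoundedUnder_comap_abs_atTop_comp_iff]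
  refine isBoundedUnder_of_eventually_le (a := 1) ?_
  filter_upwards [h] with x hx
  rw [Function.comp_apply, e.symm_apply_apply]
  refine div_le_one_of_le₀ ?_ (by positivity)
  calc |x| = (|x| ^ γ) ^ γ⁻¹ := by
        rw [← rpow_mul (abs_nonneg x), mul_inv_cancel₀ hγ.ne', rpow_one]
    _ ≤ |e x| ^ γ⁻¹ := by gcongr

theorem OrderIso.one_le_mul_of_frequently_of_isBoundedUnder (e : ℝ ≃o ℝ) {γ δ M : ℝ}
    (hδ : 0 ≤ δ) (he : ∃ᶠ x in comap (|·|) atTop, |e x| / |x| ^ γ ≤ M)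
    (hsymm : IsBoundedUnder (· ≤ ·) (comap (|·|) atTop) (fun y => |e.symm y| / |y| ^ δ)) :
    1 ≤ γ * δ := by
  by_contra! hlt
  rw [← e.isBoundedUnder_comap_abs_atTop_comp_iff] at hsymm
  obtain ⟨B, hB⟩ := hsymm.eventually_le
  have he_one : ∀ᶠ x in comap (|·|) atTop, 1 ≤ |e x| :=
    e.tendsto_comap_abs_atTop.eventually eventually_one_le_abs
  have hsmall : ∃ᶠ x in comap (|·|) atTop, |x| ≤ B * M ^ δ * |x| ^ (γ * δ) := by
    refine (he.and_eventually (hB.and (eventually_one_le_abs.and he_one))).mono ?_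
    rintro x ⟨hM, hBx, hx, hex⟩
    rw [Function.comp_apply, e.symm_apply_apply] at hBx
    have hM0 : 0 ≤ M := (by positivity : 0 ≤ |e x| / |x| ^ γ).trans hM
    have hB0 : 0 ≤ B := (by positivity : 0 ≤ |x| / |e x| ^ δ).trans hBx
    calc |x| ≤ B * |e x| ^ δ := (div_le_iff₀ (by positivity)).1 hBx
      _ ≤ B * (M * |x| ^ γ) ^ δ := by gcongr; exact (div_le_iff₀ (by positivity)).1 hM
      _ = B * M ^ δ * |x| ^ (γ * δ) := by
        rw [mul_rpow hM0 (by positivity), ← rpow_mul (abs_nonneg x), mul_assoc]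
  obtain ⟨x, hle, hlt⟩ := (hsmall.and_eventually
    (tendsto_comap.eventually (eventually_mul_rpow_lt_self (B * M ^ δ) hlt))).exists
  exact hle.not_gt hlt

theorem stmt_15_general (u : ℝ → ℝ) (hmono : StrictMono u)
    (hbij : Function.Bijective u) (Slow Supinv : Set ℝ)
    (hSlow : Slow = {γ : ℝ | 0 < γ ∧ ∃ M : ℝ,
      ∃ᶠ x in Filter.comap (fun x : ℝ => |x|) Filter.atTop, |u x| / |x| ^ γ ≤ M})
    (hSupinv : Supinv = {γ : ℝ | 0 < γ ∧
      Filter.IsBoundedUnder (· ≤ ·) (Filter.comap (fun x : ℝ => |x|) Filter.atTop)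
        (fun x : ℝ => |Function.invFun u x| / |x| ^ γ)})
    (hne : Slow.Nonempty) (hpos : 0 < sInf Slow) :
    Supinv.Nonempty ∧ 0 < sInf Supinv := by
  set e := hmono.orderIsoOfSurjective u hbij.2
  have hinvFun : Function.invFun u = e.symm :=
    Function.invFun_eq_of_injective_of_rightInverse hbij.1 e.apply_symm_apply
  set γ := sInf Slow / 2
  have hγ : 0 < γ := half_pos hpos
  have hγSlow : γ ∉ Slow := fun h =>
    (csInf_le ⟨0, fun _ h => (hSlow ▸ h).1.le⟩ h).not_gt (half_lt_self hpos)
  have hgrowth : ∀ᶠ x in comap (|·|) atTop, |x| ^ γ ≤ |e x| := by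
    simp only [hSlow, Set.mem_ofPred_eq, hγ, true_and, not_exists, not_frequently] at hγSlow
    filter_upwards [hγSlow 1] with x hx
    by_contra! hlt
    exact hx (div_le_one_of_le₀ hlt.le (by positivity))
  have hmem : γ⁻¹ ∈ Supinv :=
    hSupinv ▸ ⟨inv_pos.2 hγ, hinvFun ▸ e.isBoundedUnder_abs_symm_div_rpow_inv hγ hgrowth⟩
  refine ⟨⟨γ⁻¹, hmem⟩, ?_⟩
  obtain ⟨γ₀, hγ₀, M, hM⟩ := hSlow ▸ hne
  refine (inv_pos.2 hγ₀).trans_le (le_csInf ⟨γ⁻¹, hmem⟩ fun δ hδ => ?_)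
  rw [hSupinv, hinvFun] at hδ
  exact (inv_le_iff_one_le_mul₀' hγ₀).2
    (e.one_le_mul_of_frequently_of_isBoundedUnder hδ.1.le hM hδ.2)

/-- (Mastrolia–Possamaï–Réveillac, Lemma 5.2): if the lower growth index
`u̇ = inf {γ > 0 : liminf_{|x|→∞} |u x|/|x|^γ < ∞}` of a continuous strictly increasing
bijection `u : ℝ → ℝ` is finite and positive, then the upper growth index
`(u⁻¹)‾ = inf {γ > 0 : limsup_{|x|→∞} |u⁻¹ x|/|x|^γ < ∞}` of its inverse is finite and
positive. -/
theorem stmt_15 (u : ℝ → ℝ) (hcont : Continuous u) (hmono : StrictMono u)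
    (hbij : Function.Bijective u) (Slow Supinv : Set ℝ)
    (hSlow : Slow = {γ : ℝ | 0 < γ ∧ ∃ M : ℝ,
      ∃ᶠ x in Filter.comap (fun x : ℝ => |x|) Filter.atTop, |u x| / |x| ^ γ ≤ M})
    (hSupinv : Supinv = {γ : ℝ | 0 < γ ∧
      Filter.IsBoundedUnder (· ≤ ·) (Filter.comap (fun x : ℝ => |x|) Filter.atTop)
        (fun x : ℝ => |Function.invFun u x| / |x| ^ γ)})
    (hne : Slow.Nonempty) (hpos : 0 < sInf Slow) :
    Supinv.Nonempty ∧ 0 < sInf Supinv :=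
  stmt_15_general u hmono hbij Slow Supinv hSlow hSupinv hne hpos
end

section
/- Let ι > 0, m ∈ ℝ, a ≥ 0, C₁ > 0, x₀ ∈ ℝ, and let φ : ℝ → ℝ be measurable with 0 ≤ φ(x) ≤ C₁(1+|x|^{a}) for all x ∈ ℝ. Let p_ι(z) := (2πι)^{−1/2} exp(−z²/(2ι)) denote the centered Gaussian density with variance ι. Then ∫₀^∞ e^{−θ} ∫_ℝ φ((1−e^{−θ})m + e^{−θ}x₀ + √(1−e^{−2θ}) z) p_ι(z) dz dθ ≤ C₁ · (1 + 3^{(a−1)₊}|m|^{a} + (3^{(a−1)₊}/(1+a))|x₀|^{a} + 3^{(a−1)₊} 2^{a/2} Γ((1+a)/2) ι^{a/2}/√π), where r₊ := max(r,0) and Γ denotes the Gamma function. -/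
/-!
Write `φ(x) ≤ C₁ (1 + |x|^a)` and split the argument `(1 - e^{-θ}) m + e^{-θ} x₀ + √(1 - e^{-2θ}) z`
with the `C_r`-inequality `|α + β + γ|^a ≤ 3^{(a-1)₊} (|α|^a + |β|^a + |γ|^a)`. The coefficients of
`m` and `z` are at most `1` in absolute value, that of `x₀` is `e^{-θ}`. Integrating against the
Gaussian density leaves its absolute moment `2^{a/2} Γ((1+a)/2) ι^{a/2} / √π`, and integrating
`e^{-θ} (A + B e^{-aθ})` over `θ > 0` gives `A + B / (1 + a)`.
-/

open MeasureTheory Set Real ProbabilityTheory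
open scoped NNReal

lemma abs_add_add_rpow_le {a : ℝ} (ha : 0 ≤ a) (x y z : ℝ) :
    |x + y + z| ^ a ≤ 3 ^ max (a - 1) 0 * (|x| ^ a + |y| ^ a + |z| ^ a) := by
  have htri : |x + y + z| ^ a ≤ (|x| + |y| + |z|) ^ a :=
    rpow_le_rpow (abs_nonneg _) (abs_add_three x y z) ha
  refine htri.trans ?_
  rcases le_total a 1 with ha1 | ha1
  · rw [max_eq_right (by linarith), rpow_zero, one_mul]
    calc (|x| + |y| + |z|) ^ a ≤ (|x| + |y|) ^ a + |z| ^ a :=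
          rpow_add_le_add_rpow (by positivity) (abs_nonneg _) ha ha1
      _ ≤ |x| ^ a + |y| ^ a + |z| ^ a := by
          gcongr; exact rpow_add_le_add_rpow (abs_nonneg _) (abs_nonneg _) ha ha1
  · rw [max_eq_left (by linarith)]
    simpa [Fin.sum_univ_three, add_assoc] using
      Real.rpow_sum_le_const_mul_sum_rpow_of_nonneg Finset.univ (f := ![|x|, |y|, |z|]) ha1
        (by simp [Fin.forall_fin_succ])

lemma integrable_comp_abs_of_integrableOn_Ioi {f : ℝ → ℝ} (hf : IntegrableOn f (Ioi 0)) :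
    Integrable fun x ↦ f |x| := by
  have hpos : IntegrableOn (fun x ↦ f |x|) (Ioi 0) :=
    hf.congr_fun (fun x hx ↦ by rw [abs_of_pos hx]) measurableSet_Ioi
  have hneg : IntegrableOn (fun x ↦ f |x|) (Iio 0) := by
    rw [← (Measure.measurePreserving_neg (volume : Measure ℝ)).integrableOn_comp_preimage
      (Homeomorph.neg ℝ).measurableEmbedding]
    simpa [Function.comp_def] using hpos
  rw [← integrableOn_univ, ← Iio_union_Ici (a := (0 : ℝ)), integrableOn_union,
    integrableOn_Ici_iff_integrableOn_Ioi]
  exact ⟨hneg, hpos⟩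

lemma gaussianPDFReal_zero_eq {v : ℝ≥0} (x : ℝ) :
    gaussianPDFReal 0 v x = (√(2 * π * v))⁻¹ * exp (-(2 * v : ℝ)⁻¹ * |x| ^ 2) := by
  rw [gaussianPDFReal, sub_zero, sq_abs, neg_div, neg_mul, div_eq_inv_mul]

lemma integrable_abs_rpow_mul_gaussianPDFReal (v : ℝ≥0) {a : ℝ} (ha : -1 < a) :
    Integrable fun x ↦ |x| ^ a * gaussianPDFReal 0 v x := by
  rcases eq_or_ne v 0 with rfl | hv
  · simp
  simp_rw [gaussianPDFReal_zero_eq, mul_left_comm _ (√(2 * π * v))⁻¹]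
  refine Integrable.const_mul ?_ _
  exact integrable_comp_abs_of_integrableOn_Ioi
    (integrableOn_rpow_mul_exp_neg_mul_sq (by positivity) ha)

lemma integral_abs_rpow_mul_gaussianPDFReal {v : ℝ≥0} (hv : v ≠ 0) {a : ℝ} (ha : -1 < a) :
    ∫ x, |x| ^ a * gaussianPDFReal 0 v x =
      2 ^ (a / 2) * Gamma ((1 + a) / 2) * v ^ (a / 2) / √π := by
  have h2v : (0 : ℝ) < 2 * v := by positivity
  simp_rw [gaussianPDFReal_zero_eq, mul_left_comm _ (√(2 * π * v))⁻¹]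
  rw [integral_const_mul, integral_comp_abs (f := fun x ↦ x ^ a * exp (-(2 * v : ℝ)⁻¹ * x ^ 2))]
  simp_rw [← rpow_two]
  rw [integral_rpow_mul_exp_neg_mul_rpow two_pos ha (inv_pos.2 h2v), inv_rpow h2v.le,
    ← rpow_neg h2v.le, neg_div, neg_neg, add_div, rpow_add h2v, ← sqrt_eq_rpow,
    show (2 : ℝ) * π * v = π * (2 * v) by ring, sqrt_mul pi_pos.le,
    mul_rpow zero_le_two v.coe_nonneg, show (1 + a) / 2 = a / 2 + 1 / 2 by ring]
  have : 0 < √(2 * v) := sqrt_pos.2 h2v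
  field_simp

section GrowthBound

variable {φ : ℝ → ℝ} {C a : ℝ}

lemma apply_add_add_le_of_le_one_add_rpow (ha : 0 ≤ a) (hC : 0 ≤ C)
    (hφ : ∀ x, φ x ≤ C * (1 + |x| ^ a)) {α γ : ℝ} (hα : |α| ≤ 1) (hγ : |γ| ≤ 1)
    (m β x₀ z : ℝ) :
    φ (α * m + β * x₀ + γ * z) ≤
      C * (1 + 3 ^ max (a - 1) 0 * (|m| ^ a + |β| ^ a * |x₀| ^ a + |z| ^ a)) := by
  have hshrink : ∀ {δ : ℝ}, |δ| ≤ 1 → ∀ y : ℝ, |δ * y| ^ a ≤ |y| ^ a := fun hδ y ↦ by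
    rw [abs_mul, mul_rpow (abs_nonneg _) (abs_nonneg _)]
    exact mul_le_of_le_one_left (by positivity) (rpow_le_one (abs_nonneg _) hδ ha)
  have hsum := abs_add_add_rpow_le ha (α * m) (β * x₀) (γ * z)
  rw [abs_mul β, mul_rpow (abs_nonneg _) (abs_nonneg _)] at hsum
  refine (hφ _).trans ?_
  gcongr
  refine hsum.trans (mul_le_mul_of_nonneg_left ?_ (by positivity))
  exact add_le_add (add_le_add (hshrink hα m) le_rfl) (hshrink hγ z)

lemma integral_apply_add_add_mul_density_le (ha : 0 ≤ a)
    (hφ : ∀ x, 0 ≤ φ x ∧ φ x ≤ C * (1 + |x| ^ a)) {p : ℝ → ℝ} (hp0 : ∀ z, 0 ≤ p z)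
    (hp : Integrable p) (hp1 : ∫ z, p z = 1)
    (hpa : Integrable fun z ↦ |z| ^ a * p z) {α γ : ℝ} (hα : |α| ≤ 1) (hγ : |γ| ≤ 1)
    (m β x₀ : ℝ) :
    ∫ z, φ (α * m + β * x₀ + γ * z) * p z ≤
      C * (1 + 3 ^ max (a - 1) 0 * (|m| ^ a + |β| ^ a * |x₀| ^ a + ∫ z, |z| ^ a * p z)) := by
  have hC : 0 ≤ C := nonneg_of_mul_nonneg_left ((hφ 0).1.trans (hφ 0).2) (by positivity)
  set c : ℝ := 3 ^ max (a - 1) 0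
  set K := C * (1 + c * (|m| ^ a + |β| ^ a * |x₀| ^ a))
  calc ∫ z, φ (α * m + β * x₀ + γ * z) * p z
      ≤ ∫ z, K * p z + C * c * (|z| ^ a * p z) := by
        refine integral_mono_of_nonneg (ae_of_all _ fun z ↦ mul_nonneg (hφ _).1 (hp0 z))
          ((hp.const_mul _).add (hpa.const_mul _)) (ae_of_all _ fun z ↦ ?_)
        have := apply_add_add_le_of_le_one_add_rpow ha hC (fun x ↦ (hφ x).2) hα hγ m β x₀ z
        calc _ ≤ C * (1 + c * (|m| ^ a + |β| ^ a * |x₀| ^ a + |z| ^ a)) * p z :=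
              mul_le_mul_of_nonneg_right this (hp0 z)
          _ = _ := by ring
    _ = _ := by
        rw [integral_add (hp.const_mul _) (hpa.const_mul _), integral_const_mul,
          integral_const_mul, hp1]
        ring

end GrowthBound

lemma setIntegral_exp_neg_mul_le {F : ℝ → ℝ} {A B a : ℝ} (ha : -1 < a)
    (hF0 : ∀ θ, 0 < θ → 0 ≤ F θ) (hF : ∀ θ, 0 < θ → F θ ≤ A + B * exp (-θ) ^ a) :
    ∫ θ in Ioi 0, exp (-θ) * F θ ≤ A + B / (1 + a) := by
  have hexp : ∀ θ, exp (-θ) * exp (-θ) ^ a = exp (-(1 + a) * θ) := fun θ ↦ by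
    rw [← exp_mul, ← exp_add]; ring_nf
  have hi1 : IntegrableOn (fun θ ↦ exp (-θ)) (Ioi 0) := by
    simpa using exp_neg_integrableOn_Ioi 0 one_pos
  have hia : IntegrableOn (fun θ ↦ exp (-(1 + a) * θ)) (Ioi 0) :=
    exp_neg_integrableOn_Ioi 0 (by linarith)
  calc ∫ θ in Ioi 0, exp (-θ) * F θ
      ≤ ∫ θ in Ioi 0, A * exp (-θ) + B * exp (-(1 + a) * θ) := by
        refine integral_mono_of_nonneg ?_ ((hi1.const_mul _).add (hia.const_mul _)) ?_ <;>
          filter_upwards [ae_restrict_mem measurableSet_Ioi] with θ hθ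
        · exact mul_nonneg (exp_pos _).le (hF0 θ hθ)
        · calc exp (-θ) * F θ ≤ exp (-θ) * (A + B * exp (-θ) ^ a) :=
                mul_le_mul_of_nonneg_left (hF θ hθ) (exp_pos _).le
            _ = _ := by rw [← hexp]; ring
    _ = A + B / (1 + a) := by
        rw [integral_add (hi1.const_mul _) (hia.const_mul _), integral_const_mul,
          integral_const_mul, integral_exp_neg_Ioi_zero, integral_exp_mul_Ioi (by linarith),
          mul_zero, exp_zero, neg_div_neg_eq]
        ring

theorem stmt_16_general (ι m a C₁ x₀ : ℝ) (hι : 0 < ι) (ha : 0 ≤ a)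
    (φ : ℝ → ℝ)
    (hbound : ∀ x : ℝ, 0 ≤ φ x ∧ φ x ≤ C₁ * (1 + |x| ^ a)) :
    (∫ θ in Set.Ioi (0:ℝ), Real.exp (-θ) *
        ∫ z : ℝ,
          φ ((1 - Real.exp (-θ)) * m + Real.exp (-θ) * x₀ +
              Real.sqrt (1 - Real.exp (-2 * θ)) * z) *
            ((2 * Real.pi * ι) ^ (-(1:ℝ) / 2) * Real.exp (-z ^ 2 / (2 * ι)))) ≤
      C₁ * (1 + 3 ^ max (a - 1) 0 * |m| ^ a + 3 ^ max (a - 1) 0 / (1 + a) * |x₀| ^ a +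
        3 ^ max (a - 1) 0 * 2 ^ (a / 2) * Real.Gamma ((1 + a) / 2) * ι ^ (a / 2) /
          Real.sqrt Real.pi) := by
  set v := ι.toNNReal
  have hv : v ≠ 0 := by simpa [v] using hι
  have hdensity : ∀ z, (2 * π * ι) ^ (-(1:ℝ) / 2) * exp (-z ^ 2 / (2 * ι)) =
      gaussianPDFReal 0 v z := fun z ↦ by
    rw [gaussianPDFReal, Real.coe_toNNReal _ hι.le, sub_zero, sqrt_eq_rpow,
      ← rpow_neg (by positivity), neg_div]
  have hmoment := integral_abs_rpow_mul_gaussianPDFReal hv (a := a) (by linarith)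
  rw [Real.coe_toNNReal _ hι.le] at hmoment
  simp_rw [hdensity]
  set c : ℝ := 3 ^ max (a - 1) 0
  set M : ℝ := 2 ^ (a / 2) * Gamma ((1 + a) / 2) * ι ^ (a / 2) / √π
  refine (setIntegral_exp_neg_mul_le (A := C₁ * (1 + c * |m| ^ a + c * M))
    (B := C₁ * c * |x₀| ^ a) (a := a) (by linarith)
    (fun θ _ ↦ integral_nonneg fun z ↦ mul_nonneg (hbound _).1 (gaussianPDFReal_nonneg _ _ _))
    (fun θ hθ ↦ ?_)).trans_eq (by ring)
  have he : exp (-θ) ≤ 1 := exp_le_one_iff.2 (by linarith)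
  have hα : |1 - exp (-θ)| ≤ 1 := abs_le.2 ⟨by linarith [exp_pos (-θ)], by linarith [exp_pos (-θ)]⟩
  have hγ : |√(1 - exp (-2 * θ))| ≤ 1 := by
    rw [abs_of_nonneg (sqrt_nonneg _)]
    exact sqrt_le_one.2 (by linarith [exp_pos (-2 * θ)])
  have hinner := integral_apply_add_add_mul_density_le ha hbound (gaussianPDFReal_nonneg 0 v)
    (integrable_gaussianPDFReal 0 v) (integral_gaussianPDFReal_eq_one 0 hv)
    (integrable_abs_rpow_mul_gaussianPDFReal v (by linarith)) hα hγ m (exp (-θ)) x₀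
  rw [abs_of_pos (exp_pos _), hmoment] at hinner
  exact hinner.trans_eq (by ring)

/-- Core upper estimate (equation (Theorem 4.1-2)) in the proof of Theorem 4.1:
upper bound for the Ornstein–Uhlenbeck-type average appearing in the
Nourdin–Viens function. -/
theorem stmt_16 (ι m a C₁ x₀ : ℝ) (hι : 0 < ι) (ha : 0 ≤ a) (hC₁ : 0 < C₁)
    (φ : ℝ → ℝ) (hmeas : Measurable φ)
    (hbound : ∀ x : ℝ, 0 ≤ φ x ∧ φ x ≤ C₁ * (1 + |x| ^ a)) :
    (∫ θ in Set.Ioi (0:ℝ), Real.exp (-θ) *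
        ∫ z : ℝ,
          φ ((1 - Real.exp (-θ)) * m + Real.exp (-θ) * x₀ +
              Real.sqrt (1 - Real.exp (-2 * θ)) * z) *
            ((2 * Real.pi * ι) ^ (-(1:ℝ) / 2) * Real.exp (-z ^ 2 / (2 * ι)))) ≤
      C₁ * (1 + 3 ^ max (a - 1) 0 * |m| ^ a + 3 ^ max (a - 1) 0 / (1 + a) * |x₀| ^ a +
        3 ^ max (a - 1) 0 * 2 ^ (a / 2) * Real.Gamma ((1 + a) / 2) * ι ^ (a / 2) /
          Real.sqrt Real.pi) :=
  stmt_16_general ι m a C₁ x₀ hι ha φ hbound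
end
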